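/- arXiv:2404.08082 — 3 statements merged into one kernel-verified Lean document; each statement's English description precedes it below -/
import Mathlib

section
/- Let π : C ⥤ D be a functor with a fully faithful left adjoint l : D ⥤ C (with counit ε and unit η). Assume C has pushouts and π preserves pushouts. Fix c in C and f : π.obj c ⟶ d' in D, and let c' be the pushout in C of the counit ε_c : l(π.obj c) ⟶ c along l.map f : l(π.obj c) ⟶ l d', with pushout inclusion j : l d' ⟶ c'. Then the composite η_{d'} ≫ π.map j : d' ⟶ π.obj c' is an isomorphism; consequently, applying π to the pushout square identifies the induced map π.obj c ⟶ π.obj c' with f. -/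
open CategoryTheory Limits

namespace CategoryTheory.Adjunction

variable {C D : Type*} [Category C] [Category D] {l : D ⥤ C} {π : C ⥤ D} (adj : l ⊣ π)

/-- By the triangle identity `η_{π c} ≫ π.map ε_c = 𝟙`, since `η` is invertible. -/
instance isIso_map_counit_app [l.Full] [l.Faithful] (c : C) :
    IsIso (π.map (adj.counit.app c)) :=
  NatIso.isIso_app_of_isIso (Functor.whiskerRight adj.counit π) c

lemma map_eq_unit_comp_map_of_counit_comp_eq {c X : C} {d' : D} {f : π.obj c ⟶ d'}
    {i : c ⟶ X} {j : l.obj d' ⟶ X} (w : adj.counit.app c ≫ i = l.map f ≫ j) :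
    π.map i = f ≫ adj.unit.app d' ≫ π.map j := by
  rw [← adj.unit_naturality_assoc, ← π.map_comp, ← w, π.map_comp,
    adj.right_triangle_components_assoc]

lemma isIso_map_inr_of_isPushout_counit [l.Full] [l.Faithful] {c X Y : C}
    {g : l.obj (π.obj c) ⟶ Y} {i : c ⟶ X} {j : Y ⟶ X}
    (h : IsPushout (adj.counit.app c) g i j) [PreservesColimit (span (adj.counit.app c) g) π] :
    IsIso (π.map j) :=
  (h.map π).isIso_inr_of_isIso

end CategoryTheory.Adjunction

/-- Let `π : C ⥤ D` have a fully faithful left adjoint `l`, let `C` have pushouts and let `π`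
preserve pushouts. For `f : π.obj c ⟶ d'`, form the pushout `c'` of the counit
`ε_c : l (π.obj c) ⟶ c` along `l.map f : l (π.obj c) ⟶ l d'`, with pushout inclusion
`j = pushout.inr : l d' ⟶ c'`. Then `η_{d'} ≫ π.map j : d' ⟶ π.obj c'` is an isomorphism,
and applying `π` identifies the induced map `π.obj c ⟶ π.obj c'` with `f`. -/
theorem unit_comp_map_inr_isIso_of_pushout_counit
    {C : Type*} {D : Type*} [Category C] [Category D]
    (π : C ⥤ D) (l : D ⥤ C) (adj : l ⊣ π) [l.Full] [l.Faithful]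
    [HasPushouts C] [PreservesColimitsOfShape WalkingSpan π]
    (c : C) {d' : D} (f : π.obj c ⟶ d') :
    IsIso (adj.unit.app d' ≫ π.map (pushout.inr (adj.counit.app c) (l.map f))) ∧
    π.map (pushout.inl (adj.counit.app c) (l.map f)) =
      f ≫ adj.unit.app d' ≫ π.map (pushout.inr (adj.counit.app c) (l.map f)) := by
  have hj := adj.isIso_map_inr_of_isPushout_counit (IsPushout.of_hasPushout _ (l.map f))
  exact ⟨inferInstance, adj.map_eq_unit_comp_map_of_counit_comp_eq pushout.condition⟩
end

section
/- Let π : C ⥤ D be a functor with a fully faithful left adjoint l : D ⥤ C (with counit ε and unit η). Assume C has pushouts and π preserves pushouts. Fix c in C and f : π.obj c ⟶ d' in D; let c' be the pushout in C of ε_c : l(π.obj c) ⟶ c along l.map f, with structure maps φ : c ⟶ c' and j : l d' ⟶ c', and let θ : d' ⟶ π.obj c' be the composite η_{d'} ≫ π.map j. Then for every object c'' of C, the map sending ψ : c' ⟶ c'' to the pair (ψ ∘ φ, π.map ψ ∘ θ) is a bijection from Hom_C(c', c'') onto the set of pairs (g : c ⟶ c'', h : d' ⟶ π.obj c'') such that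 h ∘ f = π.map g; i.e. the square of hom-sets Hom_C(c',c'') → Hom_C(c,c'') over Hom_D(π c', π c'') ≅ Hom_D(d', π c'') → Hom_D(π c, π c'') is a pullback of sets. -/
open CategoryTheory Limits

/-
Transposing along `l ⊣ π` identifies maps `h : d' ⟶ π.obj c''` with maps `l.obj d' ⟶ c''`,
and under this identification the condition `f ≫ h = π.map g` becomes commutativity of the
cocone `(g, l.map h ≫ ε_{c''})` on the span `(ε_c, l.map f)`. The pullback of hom-sets is
therefore the universal property of the pushout `c'`.
-/

namespace CategoryTheory.Adjunction

variable {C D : Type*} [Category C] [Category D] {l : D ⥤ C} {π : C ⥤ D}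

theorem counit_app_comp_eq_map_comp_iff (adj : l ⊣ π) {c c'' : C} {d' : D}
    (f : π.obj c ⟶ d') (g : c ⟶ c'') (k : l.obj d' ⟶ c'') :
    adj.counit.app c ≫ g = l.map f ≫ k ↔ f ≫ adj.homEquiv _ _ k = π.map g := by
  rw [← (adj.homEquiv _ _).apply_eq_iff_eq, homEquiv_naturality_left, homEquiv_naturality_right,
    homEquiv_unit, right_triangle_components, Category.id_comp, eq_comm]

theorem unit_app_comp_map_comp_map_eq_homEquiv (adj : l ⊣ π) {d : D} {c c'' : C}
    (j : l.obj d ⟶ c) (ψ : c ⟶ c'') :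
    (adj.unit.app d ≫ π.map j) ≫ π.map ψ = adj.homEquiv _ _ (j ≫ ψ) := by
  rw [homEquiv_unit, Functor.map_comp, Category.assoc]

end CategoryTheory.Adjunction

theorem pushout_cocartesian_hom_pullback_general
    {C : Type*} {D : Type*} [Category C] [Category D]
    (π : C ⥤ D) (l : D ⥤ C) (adj : l ⊣ π)
    [HasPushouts C]
    (c : C) {d' : D} (f : π.obj c ⟶ d') :
    (∀ (c'' : C) (ψ : pushout (adj.counit.app c) (l.map f) ⟶ c''),
      f ≫ (adj.unit.app d' ≫ π.map (pushout.inr (adj.counit.app c) (l.map f))) ≫ π.map ψ =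
        π.map (pushout.inl (adj.counit.app c) (l.map f) ≫ ψ)) ∧
    (∀ (c'' : C) (g : c ⟶ c'') (h : d' ⟶ π.obj c''), f ≫ h = π.map g →
      ∃! ψ : pushout (adj.counit.app c) (l.map f) ⟶ c'',
        pushout.inl (adj.counit.app c) (l.map f) ≫ ψ = g ∧
        (adj.unit.app d' ≫ π.map (pushout.inr (adj.counit.app c) (l.map f))) ≫ π.map ψ = h) := by
  simp only [adj.unit_app_comp_map_comp_map_eq_homEquiv]
  refine ⟨fun c'' ψ => (adj.counit_app_comp_eq_map_comp_iff f _ _).1 (pushout.condition_assoc ψ),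
    fun c'' g h hfh => ?_⟩
  obtain ⟨k, rfl⟩ := (adj.homEquiv _ _).surjective h
  have hk := (adj.counit_app_comp_eq_map_comp_iff f g k).2 hfh
  refine ⟨pushout.desc g k hk, ⟨pushout.inl_desc .., by rw [pushout.inr_desc]⟩,
    fun ψ ⟨hg, hh⟩ => pushout.hom_ext ?_ ?_⟩
  · rw [hg, pushout.inl_desc]
  · rw [pushout.inr_desc, (adj.homEquiv _ _).injective hh]

/-- Let `π : C ⥤ D` have a fully faithful left adjoint `l`, let `C` have pushouts and let `π`
preserve pushouts. For `f : π.obj c ⟶ d'`, let `c'` be the pushout of the counit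
`ε_c : l (π.obj c) ⟶ c` along `l.map f`, with structure maps `φ = pushout.inl : c ⟶ c'` and
`j = pushout.inr : l d' ⟶ c'`, and let `θ = η_{d'} ≫ π.map j : d' ⟶ π.obj c'`. Then for every
`c''`, the assignment `ψ ↦ (φ ≫ ψ, θ ≫ π.map ψ)` is a bijection from `Hom_C(c', c'')` onto
the set of pairs `(g : c ⟶ c'', h : d' ⟶ π.obj c'')` with `f ≫ h = π.map g`; i.e. the
hom-set square is a pullback of sets. -/
theorem pushout_cocartesian_hom_pullback
    {C : Type*} {D : Type*} [Category C] [Category D]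
    (π : C ⥤ D) (l : D ⥤ C) (adj : l ⊣ π) [l.Full] [l.Faithful]
    [HasPushouts C] [PreservesColimitsOfShape WalkingSpan π]
    (c : C) {d' : D} (f : π.obj c ⟶ d') :
    (∀ (c'' : C) (ψ : pushout (adj.counit.app c) (l.map f) ⟶ c''),
      f ≫ (adj.unit.app d' ≫ π.map (pushout.inr (adj.counit.app c) (l.map f))) ≫ π.map ψ =
        π.map (pushout.inl (adj.counit.app c) (l.map f) ≫ ψ)) ∧
    (∀ (c'' : C) (g : c ⟶ c'') (h : d' ⟶ π.obj c''), f ≫ h = π.map g →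
      ∃! ψ : pushout (adj.counit.app c) (l.map f) ⟶ c'',
        pushout.inl (adj.counit.app c) (l.map f) ≫ ψ = g ∧
        (adj.unit.app d' ≫ π.map (pushout.inr (adj.counit.app c) (l.map f))) ≫ π.map ψ = h) :=
  pushout_cocartesian_hom_pullback_general π l adj c f
end

section
/- Let K be a connected category, let f : D ⥤ C be a functor that preserves limits of shape K, let c be an object of C, and let p : K ⥤ D be a functor such that p ⋙ f is the constant functor at c. If t is a limit cone of p, then all the morphisms f.map (t.π.app k) : f.obj t.pt ⟶ c (for k in K) coincide, and this common morphism is an isomorphism. In particular the limit of p lies, up to isomorphism, in the fiber of f over c, and the fiber inclusion creates limits of shape K. -/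
open CategoryTheory Limits

/-- For any cone over `p ⋙ f` where `p ⋙ f` is the constant functor at `c` on a connected
category, all legs composed with the canonical identifications coincide. -/
lemma cone_legs_constant_of_connected
    {K : Type*} {D : Type*} {C : Type*} [Category K] [Category D] [Category C]
    [IsConnected K] (f : D ⥤ C)
    (c : C) (p : K ⥤ D) (hp : p ⋙ f = (Functor.const K).obj c)
    (s : Cone (p ⋙ f)) (j k : K) :
    s.π.app j ≫ eqToHom (Functor.congr_obj hp j)
      = s.π.app k ≫ eqToHom (Functor.congr_obj hp k) := by
  apply constant_of_preserves_morphisms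
    (fun k => s.π.app k ≫ eqToHom (Functor.congr_obj hp k))
  intro a b α
  have h1 : s.π.app a ≫ (p ⋙ f).map α = s.π.app b := s.w α
  have h2 := Functor.congr_hom hp α
  rw [← h1, Category.assoc, h2]
  simp

/-- Let `K` be a connected category, `f : D ⥤ C` a functor preserving limits of shape `K`,
`c : C`, and `p : K ⥤ D` a functor such that `p ⋙ f` is the constant functor at `c`. If `t` is
a limit cone of `p`, then all the morphisms `f.map (t.π.app k) : f.obj t.pt ⟶ c` coincide
(after the canonical identification `f.obj (p.obj k) = c`), and this common morphism is an
isomorphism; in particular the limit of `p` lies, up to isomorphism, in the fiber of `f`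
over `c`. -/
theorem limit_in_fiber_of_connected
    {K : Type*} {D : Type*} {C : Type*} [Category K] [Category D] [Category C]
    [IsConnected K] (f : D ⥤ C) [PreservesLimitsOfShape K f]
    (c : C) (p : K ⥤ D) (hp : p ⋙ f = (Functor.const K).obj c)
    (t : Cone p) (ht : IsLimit t) :
    ∃ m : f.obj t.pt ⟶ c,
      (∀ k : K, f.map (t.π.app k) ≫ eqToHom (Functor.congr_obj hp k) = m) ∧ IsIso m := by
  let k₀ : K := Classical.arbitrary K
  let m : f.obj t.pt ⟶ c := f.map (t.π.app k₀) ≫ eqToHom (Functor.congr_obj hp k₀)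
  have hconst : ∀ k : K, f.map (t.π.app k) ≫ eqToHom (Functor.congr_obj hp k) = m :=
    fun k => cone_legs_constant_of_connected f c p hp (f.mapCone t) k k₀
  refine ⟨m, hconst, ?_⟩
  -- the constant cone at `c` is a limit cone of `p ⋙ f`
  let s : Cone (p ⋙ f) :=
    { pt := c
      π :=
        { app := fun k => eqToHom (Functor.congr_obj hp k).symm
          naturality := by
            intro a b α
            have h2 := Functor.congr_hom hp α
            simp only [Functor.const_obj_obj, Functor.const_obj_map,
              Category.comp_id]
            rw [h2]
            simp } }
  have hs : IsLimit s :=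
    { lift := fun s' => s'.π.app k₀ ≫ eqToHom (Functor.congr_obj hp k₀)
      fac := fun s' k => by
        have h := cone_legs_constant_of_connected f c p hp s' k₀ k
        simp only [s, Category.assoc]
        rw [← Category.assoc, h]
        simp
      uniq := fun s' m' hm' => by
        have := hm' k₀
        simp only [s] at this
        show m' = s'.π.app k₀ ≫ eqToHom (Functor.congr_obj hp k₀)
        rw [← this]
        simp }
  have hmap : IsLimit (f.mapCone t) := isLimitOfPreserves f ht
  have : m = (IsLimit.conePointUniqueUpToIso hmap hs).hom := by
    apply hs.uniq (f.mapCone t)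
    intro k
    have := hconst k
    simp only [s, Functor.mapCone_π_app]
    rw [← hconst k]
    simp
  rw [this]
  infer_instance
end
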